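/- arXiv:1404.7784 — 5 statements merged into one kernel-verified Lean document; each statement's English description precedes it below -/
import Mathlib

section
/- If f : V × B → A with private budgets is implementable by payments (p_a), then for all outcomes a, a': δ(a, a') ≥ p_a − p_{a'} > −∞, where δ(a, a') = inf { v(a) − v(a') : f(v, B) = a for some B ≥ β(a') } and β(a') = inf { B : f(v, B) = a' for some v } (with inf over the empty set equal to +∞). -/
noncomputable section

open scoped Classical

variable {A : Type*} {N : Type*}

/-- minimum reported budget required to obtain outcome `a` -/
def beta (V : Set (A → ℝ)) (Bud : Set EReal) (f : (A → ℝ) → EReal → A) (a : A) : EReal :=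
  sInf {B | B ∈ Bud ∧ ∃ v ∈ V, f v B = a}

/-- minimum reported value required to obtain outcome `a` -/
def omegaV (V : Set (A → ℝ)) (Bud : Set EReal) (f : (A → ℝ) → EReal → A) (a : A) : EReal :=
  sInf {x : EReal | ∃ v ∈ V, ∃ B ∈ Bud, f v B = a ∧ x = ((v a : ℝ) : EReal)}

def theta (V : Set (A → ℝ)) (Bud : Set EReal) (f : (A → ℝ) → EReal → A) (a : A) : EReal :=
  min (beta V Bud f a) (omegaV V Bud f a)

def delta (V : Set (A → ℝ)) (Bud : Set EReal) (f : (A → ℝ) → EReal → A) (a a' : A) : EReal :=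
  sInf {x : EReal | ∃ v ∈ V, ∃ B ∈ Bud, beta V Bud f a' ≤ B ∧ f v B = a ∧
    x = ((v a - v a' : ℝ) : EReal)}

def deltaHat (V : Set (A → ℝ)) (Bud : Set EReal) (f : (A → ℝ) → EReal → A) (a a' : A) : EReal :=
  sInf {x : EReal | ∃ v ∈ V, ∃ B ∈ Bud, f v B = a ∧ x = ((v a - v a' : ℝ) : EReal)}

/-- arc length of the graph `G_{f,B}` -/
def glen (V : Set (A → ℝ)) (Bud : Set EReal) (f : (A → ℝ) → EReal → A) (a a' : A) : EReal :=
  min (delta V Bud f a a') (theta V Bud f a)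

/-- arc length of the graph `Ĝ_{f,B}` -/
def glenHat (V : Set (A → ℝ)) (Bud : Set EReal) (f : (A → ℝ) → EReal → A) (a a' : A) : EReal :=
  min (deltaHat V Bud f a a') (theta V Bud f a)

/-- length of the closed walk through the nodes of the list `c` -/
def cycLen (l : N → N → EReal) (c : List N) : EReal :=
  ((c.zip (c.rotate 1)).map fun pr => l pr.1 pr.2).sum

def NoNegCycle (l : N → N → EReal) : Prop :=
  ∀ c : List N, c ≠ [] → 0 ≤ cycLen l c

def pathLen (l : N → N → EReal) : List N → EReal
  | [] => 0
  | [_] => 0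
  | x :: y :: t => l x y + pathLen l (y :: t)

/-- shortest-path distance from `i` to `k` in the complete graph with lengths `l` -/
def distG (l : N → N → EReal) (i k : N) : EReal :=
  sInf (pathLen l '' {c : List N | c.head? = some i ∧ c.getLast? = some k})

def Onto (V : Set (A → ℝ)) (Bud : Set EReal) (f : (A → ℝ) → EReal → A) : Prop :=
  ∀ a : A, ∃ v ∈ V, ∃ B ∈ Bud, f v B = a

def NonnegV (V : Set (A → ℝ)) : Prop := ∀ v ∈ V, ∀ a, 0 ≤ v a

def NonnegB (Bud : Set EReal) : Prop := ∀ B ∈ Bud, 0 ≤ B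

/-- `p` gives per-outcome prices implementing `f` : full incentive compatibility
(arbitrary misreports of value and budget), IR, BF and NPT. -/
def Implements (V : Set (A → ℝ)) (Bud : Set EReal) (f : (A → ℝ) → EReal → A)
    (p : A → ℝ) : Prop :=
  (∀ v ∈ V, ∀ B ∈ Bud, ∀ v' ∈ V, ∀ B' ∈ Bud,
      ((p (f v' B') : ℝ) : EReal) ≤ B →
      v (f v' B') - p (f v' B') ≤ v (f v B) - p (f v B)) ∧
  (∀ v ∈ V, ∀ B ∈ Bud, p (f v B) ≤ v (f v B)) ∧
  (∀ v ∈ V, ∀ B ∈ Bud, ((p (f v B) : ℝ) : EReal) ≤ B) ∧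
  (∀ v ∈ V, ∀ B ∈ Bud, 0 ≤ p (f v B))

/-- as `Implements`, but budget over-reporting is impossible: `B' ≤ B`. -/
def ImplementsNoOver (V : Set (A → ℝ)) (Bud : Set EReal) (f : (A → ℝ) → EReal → A)
    (p : A → ℝ) : Prop :=
  (∀ v ∈ V, ∀ B ∈ Bud, ∀ v' ∈ V, ∀ B' ∈ Bud, B' ≤ B →
      ((p (f v' B') : ℝ) : EReal) ≤ B →
      v (f v' B') - p (f v' B') ≤ v (f v B) - p (f v B)) ∧
  (∀ v ∈ V, ∀ B ∈ Bud, p (f v B) ≤ v (f v B)) ∧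
  (∀ v ∈ V, ∀ B ∈ Bud, ((p (f v B) : ℝ) : EReal) ≤ B) ∧
  (∀ v ∈ V, ∀ B ∈ Bud, 0 ≤ p (f v B))

/-- arcs of the augmented graph `H` : `none` is the special node `0`. -/
def HArc (d : A → A → EReal) : Option A → Option A → Prop
  | some i, some k => d i k < ⊤
  | none, some _ => True
  | some _, none => True
  | none, none => False

/-- arc lengths of the augmented graph `H`. -/
def HLen (d : A → A → EReal) (t : A → EReal) : Option A → Option A → EReal
  | some i, some k => d i k
  | none, some _ => 0
  | some i, none => t i
  | none, none => 0

def NoNegCycleH (d : A → A → EReal) (t : A → EReal) : Prop :=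
  ∀ c : List (Option A), c ≠ [] →
    (∀ pr ∈ c.zip (c.rotate 1), HArc d pr.1 pr.2) →
    0 ≤ cycLen (HLen d t) c

/-- shortest-path distance from node `i` to the special node `0` in `H`. -/
def distH (d : A → A → EReal) (t : A → EReal) (i : A) : EReal :=
  sInf (pathLen (HLen d t) ''
    {c : List (Option A) | c.head? = some (some i) ∧ c.getLast? = some none ∧
      ∀ pr ∈ c.zip c.tail, HArc d pr.1 pr.2})

/-- Claim 2 of the paper. If `f` is implementable by per-outcome
prices `p`, then `δ(a, a') ≥ p_a − p_{a'} > −∞` for all outcomes `a, a'`. -/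
theorem stmt3 {A : Type*} (V : Set (A → ℝ)) (Bud : Set EReal)
    (f : (A → ℝ) → EReal → A) (p : A → ℝ)
    (hV : NonnegV V) (hB : NonnegB Bud) (honto : Onto V Bud f)
    (himp : Implements V Bud f p) :
    ∀ a a' : A,
      ((p a - p a' : ℝ) : EReal) ≤ delta V Bud f a a' ∧
      (⊥ : EReal) < ((p a - p a' : ℝ) : EReal) := by
  intro a a'
  refine ⟨?_, EReal.bot_lt_coe _⟩
  obtain ⟨hic, hir, hbf, hnpt⟩ := himp
  -- p a' ≤ beta a'
  have hpbeta : ((p a' : ℝ) : EReal) ≤ beta V Bud f a' := by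
    apply le_sInf
    rintro B ⟨hBbud, v, hv, hf⟩
    have := hbf v hv B hBbud
    rwa [hf] at this
  apply le_sInf
  rintro x ⟨v, hv, B, hB, hbeta, hf, rfl⟩
  -- p a' ≤ B
  have hpB : ((p a' : ℝ) : EReal) ≤ B := le_trans hpbeta hbeta
  -- a witness for a'
  obtain ⟨v', hv', B', hB', hf'⟩ := honto a'
  have := hic v hv B hB v' hv' B' hB' (by rwa [hf'])
  rw [hf, hf'] at this
  have : p a - p a' ≤ v a - v a' := by linarith
  exact_mod_cast this
end
end

section
/- If f : V × B → A with private budgets is implementable, then the complete directed graph G_{f,B} with arc lengths l(a, a') = min(δ(a, a'), θ(a)) contains no negative cycle. -/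
noncomputable section

open scoped Classical

variable {A : Type*} {N : Type*}

lemma sum_pairs_le {N : Type*} (len : N → N → EReal) (p : N → ℝ)
    (h : ∀ a b : N, ((p a - p b : ℝ) : EReal) ≤ len a b) :
    ∀ (l1 l2 : List N), l1.length = l2.length →
      (((l1.map p).sum - (l2.map p).sum : ℝ) : EReal) ≤
        ((l1.zip l2).map fun pr => len pr.1 pr.2).sum := by
  intro l1
  induction l1 with
  | nil =>
    intro l2 hl
    simp [List.length_eq_zero_iff.mp hl.symm]
  | cons a t ih =>
    intro l2 hl
    cases l2 with
    | nil => simp at hl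
    | cons b t2 =>
      simp only [List.length_cons, Nat.succ.injEq] at hl
      have := ih t2 hl
      have key : (((a :: t).map p).sum - ((b :: t2).map p).sum : ℝ)
          = (p a - p b) + ((t.map p).sum - (t2.map p).sum) := by
        simp; ring
      rw [key, EReal.coe_add]
      simp only [List.zip_cons_cons, List.map_cons, List.sum_cons]
      exact add_le_add (h a b) this

/-- necessity. If `f` with private budgets is implementable, then the
graph `G_{f,B}` with arc lengths `min(δ(a,a'), θ(a))` contains no negative cycle. -/
theorem stmt5 {A : Type*} (V : Set (A → ℝ)) (Bud : Set EReal)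
    (f : (A → ℝ) → EReal → A)
    (hV : NonnegV V) (hB : NonnegB Bud) (honto : Onto V Bud f)
    (himp : ∃ p : A → ℝ, Implements V Bud f p) :
    NoNegCycle (glen V Bud f) := by
  obtain ⟨p, hIC, hIR, hBF, hNPT⟩ := himp
  -- nonnegativity of all prices (via onto)
  have hp0 : ∀ a : A, 0 ≤ p a := by
    intro a
    obtain ⟨v, hv, B, hBm, hf⟩ := honto a
    have := hNPT v hv B hBm
    rwa [hf] at this
  -- p a ≤ beta a
  have hpβ : ∀ a : A, ((p a : ℝ) : EReal) ≤ beta V Bud f a := by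
    intro a
    apply le_sInf
    rintro B ⟨hBm, v, hv, hf⟩
    have := hBF v hv B hBm
    rwa [hf] at this
  -- p a ≤ omega a
  have hpω : ∀ a : A, ((p a : ℝ) : EReal) ≤ omegaV V Bud f a := by
    intro a
    apply le_sInf
    rintro x ⟨v, hv, B, hBm, hf, hx⟩
    have := hIR v hv B hBm
    rw [hf] at this
    rw [hx]
    exact_mod_cast this
  -- p a - p a' ≤ delta a a'
  have hpδ : ∀ a a' : A, ((p a - p a' : ℝ) : EReal) ≤ delta V Bud f a a' := by
    intro a a'
    apply le_sInf
    rintro x ⟨v, hv, B, hBm, hβ, hf, hx⟩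
    obtain ⟨v', hv', B', hB'm, hf'⟩ := honto a'
    have hpa' : ((p a' : ℝ) : EReal) ≤ B := le_trans (hpβ a') hβ
    have := hIC v hv B hBm v' hv' B' hB'm (by rwa [hf'])
    rw [hf, hf'] at this
    rw [hx]
    exact_mod_cast by linarith
  have key : ∀ a a' : A, ((p a - p a' : ℝ) : EReal) ≤ glen V Bud f a a' := by
    intro a a'
    refine le_min (hpδ a a') (le_min ?_ ?_)
    · exact le_trans (by exact_mod_cast by linarith [hp0 a']) (hpβ a)
    · exact le_trans (by exact_mod_cast by linarith [hp0 a']) (hpω a)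
  intro c hc
  have hlen : c.length = (c.rotate 1).length := by simp
  have hsum := sum_pairs_le (glen V Bud f) p key c (c.rotate 1) hlen
  have hperm : ((c.rotate 1).map p).sum = (c.map p).sum :=
    ((c.rotate_perm 1).map p).sum_eq
  rw [hperm] at hsum
  simpa [cycLen] using hsum
end
end

section
/- If the augmented graph H_{f,B} contains no negative cycle, then f : V × B → A (with budget over-reporting disallowed, i.e., agents can only report B' ≤ B) is implementable: the payments p_{a_i} = Δ_H(i, 0), the shortest-path distance from node i to node 0 in H_{f,B}, satisfy IC (against under-reports of budget), IR, BF, and NPT. -/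
noncomputable section

open scoped Classical

variable {A : Type*} {N : Type*}

/-!
The shortest-path payments are finite and nonnegative: the direct arc `(i, 0)` bounds
`Δ_H(i, 0)` by `θ(a_i) < ∞`, and closing any path from `i` to `0` by the zero-length arc
`(0, i)` gives a cycle, which is nonnegative. Being at most `θ = min(β, ω)` gives BF and IR.
IC is the triangle inequality `p_a ≤ δ(a, a') + p_{a'}`: when `B' ≤ B`, the true type
`(v, B)` itself witnesses `β(a') ≤ B`, so `δ(a, a') ≤ v(a) - v(a')`.
-/

lemma pathLen_eq_sum {N : Type*} (l : N → N → EReal) :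
    ∀ c : List N, pathLen l c = ((c.zip c.tail).map fun pr => l pr.1 pr.2).sum
  | [] => rfl
  | [_] => rfl
  | x :: y :: t => by simp [pathLen, pathLen_eq_sum l (y :: t)]

lemma zip_cons_append_singleton {N : Type*} (b : N) :
    ∀ (x : N) (c : List N),
      (x :: c).zip (c ++ [b]) = (x :: c).zip c ++ [((x :: c).getLast (by simp), b)]
  | _, [] => rfl
  | _, y :: c => by
    simp [zip_cons_append_singleton b y c, List.getLast_cons (List.cons_ne_nil y c)]

lemma zip_rotate_one_cons {N : Type*} (x : N) (c : List N) :
    (x :: c).zip ((x :: c).rotate 1) = (x :: c).zip c ++ [((x :: c).getLast (by simp), x)] := by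
  rw [List.rotate_cons_succ, List.rotate_zero, zip_cons_append_singleton]

lemma cycLen_cons {N : Type*} (l : N → N → EReal) (x : N) (c : List N) :
    cycLen l (x :: c) = pathLen l (x :: c) + l ((x :: c).getLast (by simp)) x := by
  rw [cycLen, zip_rotate_one_cons, pathLen_eq_sum]
  simp

section AugmentedGraph

variable {A : Type*} {d : A → A → EReal} {t : A → EReal}

lemma distH_le_pathLen {a : A} {c : List (Option A)} (hhead : c.head? = some (some a))
    (hlast : c.getLast? = some none) (harcs : ∀ pr ∈ c.zip c.tail, HArc d pr.1 pr.2) :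
    distH d t a ≤ pathLen (HLen d t) c :=
  sInf_le ⟨c, ⟨hhead, hlast, harcs⟩, rfl⟩

lemma le_distH {a : A} {x : EReal}
    (h : ∀ c : List (Option A), c.head? = some (some a) → c.getLast? = some none →
      (∀ pr ∈ c.zip c.tail, HArc d pr.1 pr.2) → x ≤ pathLen (HLen d t) c) :
    x ≤ distH d t a :=
  le_sInf <| by
    rintro _ ⟨c, ⟨hhead, hlast, harcs⟩, rfl⟩
    exact h c hhead hlast harcs

lemma distH_le (a : A) : distH d t a ≤ t a :=
  (distH_le_pathLen (c := [some a, none]) rfl rfl (by simp [HArc])).trans_eq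
    (by simp [pathLen, HLen])

lemma NoNegCycleH.distH_nonneg (hH : NoNegCycleH d t) (a : A) : 0 ≤ distH d t a := by
  refine le_distH fun c hhead hlast harcs => ?_
  obtain ⟨c, rfl⟩ := List.head?_eq_some_iff.mp hhead
  have hend : (some a :: c).getLast (by simp) = none := by
    simpa [List.getLast?_eq_some_getLast] using hlast
  have hcyc := hH (some a :: c) (by simp) <| by
    rw [zip_rotate_one_cons, hend]
    intro pr hpr
    rcases List.mem_append.mp hpr with hpr | hpr
    · exact harcs pr hpr
    · obtain rfl := List.mem_singleton.mp hpr
      trivial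
  simpa [cycLen_cons, hend, HLen] using hcyc

lemma distH_le_add {a a' : A} {r : ℝ} (h : d a a' ≤ r) : distH d t a ≤ r + distH d t a' := by
  rw [add_comm, ← EReal.sub_le_iff_le_add (.inl (EReal.coe_ne_bot r)) (.inl (EReal.coe_ne_top r))]
  refine le_distH fun c hhead hlast harcs => EReal.sub_le_of_le_add ?_
  obtain ⟨c, rfl⟩ := List.head?_eq_some_iff.mp hhead
  calc distH d t a ≤ pathLen (HLen d t) (some a :: some a' :: c) :=
        distH_le_pathLen rfl (by simpa using hlast) <| by
          simpa [HArc, h.trans_lt (EReal.coe_lt_top r)] using harcs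
    _ = d a a' + pathLen (HLen d t) (some a' :: c) := rfl
    _ ≤ pathLen (HLen d t) (some a' :: c) + r := by rw [add_comm]; gcongr

end AugmentedGraph

section Mechanism

variable {A : Type*} {V : Set (A → ℝ)} {Bud : Set EReal} {f : (A → ℝ) → EReal → A}
  {v v' : A → ℝ} {B B' : EReal}

lemma beta_le (hv : v ∈ V) (hB : B ∈ Bud) : beta V Bud f (f v B) ≤ B :=
  sInf_le ⟨hB, v, hv, rfl⟩

lemma omegaV_le (hv : v ∈ V) (hB : B ∈ Bud) : omegaV V Bud f (f v B) ≤ v (f v B) :=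
  sInf_le ⟨v, hv, B, hB, rfl, rfl⟩

lemma theta_lt_top (honto : Onto V Bud f) (a : A) : theta V Bud f a < ⊤ := by
  obtain ⟨v, hv, B, hB, rfl⟩ := honto a
  exact (min_le_right _ _).trans_lt <| (omegaV_le hv hB).trans_lt (EReal.coe_lt_top _)

lemma delta_le_of_le (hv : v ∈ V) (hB : B ∈ Bud) (hv' : v' ∈ V) (hB' : B' ∈ Bud)
    (hBB' : B' ≤ B) :
    delta V Bud f (f v B) (f v' B') ≤ ((v (f v B) - v (f v' B') : ℝ) : EReal) :=
  sInf_le ⟨v, hv, B, hB, (beta_le hv' hB').trans hBB', rfl, rfl⟩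

end Mechanism

theorem stmt7_general {A : Type*} (V : Set (A → ℝ)) (Bud : Set EReal)
    (f : (A → ℝ) → EReal → A)
    (honto : Onto V Bud f)
    (hH : NoNegCycleH (delta V Bud f) (theta V Bud f)) :
    ∃ p : A → ℝ,
      (∀ a : A, ((p a : ℝ) : EReal) = distH (delta V Bud f) (theta V Bud f) a) ∧
      ImplementsNoOver V Bud f p := by
  set dist := distH (delta V Bud f) (theta V Bud f)
  have hp (a : A) : ((dist a).toReal : EReal) = dist a :=
    EReal.coe_toReal ((distH_le a).trans_lt (theta_lt_top honto a)).ne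
      (ne_bot_of_le_ne_bot EReal.zero_ne_bot (hH.distH_nonneg a))
  refine ⟨fun a => (dist a).toReal, hp, fun v hv B hB v' hv' B' hB' hBB' _ => ?_,
    fun v hv B hB => ?_, fun v hv B hB => ?_, fun v hv B hB => ?_⟩
  · have htri : dist (f v B) ≤ ((v (f v B) - v (f v' B') : ℝ) : EReal) + dist (f v' B') :=
      distH_le_add (delta_le_of_le hv hB hv' hB' hBB')
    rw [← hp (f v B), ← hp (f v' B'), ← EReal.coe_add, EReal.coe_le_coe_iff] at htri
    linarith
  · refine EReal.coe_le_coe_iff.mp <| (hp _).trans_le <| (distH_le _).trans ?_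
    exact (min_le_right _ _).trans (omegaV_le hv hB)
  · exact (hp _).trans_le <| (distH_le _).trans <| (min_le_left _ _).trans (beta_le hv hB)
  · exact EReal.coe_nonneg.mp <| (hp _).symm ▸ hH.distH_nonneg _

/-- sufficiency with no budget over-reporting. If `H_{f,B}` has no
negative cycle, then the shortest-path payments `p_{a_i} = Δ_H(i,0)` implement `f`
(IC against reports with `B' ≤ B`, IR, BF, NPT). -/
theorem stmt7 {A : Type*} (V : Set (A → ℝ)) (Bud : Set EReal)
    (f : (A → ℝ) → EReal → A)
    (hV : NonnegV V) (hB : NonnegB Bud) (honto : Onto V Bud f)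
    (hH : NoNegCycleH (delta V Bud f) (theta V Bud f)) :
    ∃ p : A → ℝ,
      (∀ a : A, ((p a : ℝ) : EReal) = distH (delta V Bud f) (theta V Bud f) a) ∧
      ImplementsNoOver V Bud f p :=
  stmt7_general V Bud f honto hH
end
end

section
/- For n players with 0/1 valuations over a finite outcome set, the affine maximizer without money f(v_1,…,v_n) ∈ argmax_{a∈A} ( Σ_ℓ κ_ℓ·v_ℓ(a) + γ_a ) with fixed positive weights κ_ℓ > 0, arbitrary γ_a ∈ ℝ, and lexicographic tie-breaking, is dominant-strategy implementable without money: for every player ℓ and every v_ℓ, v'_ℓ, v_{−ℓ}, v_ℓ(f(v_ℓ, v_{−ℓ})) ≥ v_ℓ(f(v'_ℓ, v_{−ℓ})). -/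
noncomputable section

/-- For `n` players with 0/1 valuations over a finite outcome set,
the affine maximizer without money with positive weights `κ`, outcome weights `γ` and
lexicographic (least-element) tie-breaking is dominant-strategy implementable without
money. -/
theorem stmt16 {n : ℕ} {A : Type*} [Fintype A] [LinearOrder A]
    (κ : Fin n → ℝ) (hκ : ∀ ℓ, 0 < κ ℓ) (γ : A → ℝ)
    (f : (Fin n → A → ℝ) → A)
    (hf : ∀ v : Fin n → A → ℝ,
      (∀ a : A, (∑ ℓ, κ ℓ * v ℓ a) + γ a ≤ (∑ ℓ, κ ℓ * v ℓ (f v)) + γ (f v)) ∧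
      (∀ a : A, (∑ ℓ, κ ℓ * v ℓ a) + γ a = (∑ ℓ, κ ℓ * v ℓ (f v)) + γ (f v) → f v ≤ a)) :
    ∀ (ℓ : Fin n) (v : Fin n → A → ℝ) (v' : A → ℝ),
      (∀ m a, v m a = 0 ∨ v m a = 1) → (∀ a, v' a = 0 ∨ v' a = 1) →
      v ℓ (f (Function.update v ℓ v')) ≤ v ℓ (f v) := by
  intro ℓ v v' hv hv'
  set u := Function.update v ℓ v' with hu
  set a := f v with ha
  set b := f u with hb
  have key : ∀ x : A, (∑ m, κ m * u m x) = (∑ m, κ m * v m x) + κ ℓ * (v' x - v ℓ x) := by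
    intro x
    have h : ∑ m, (κ m * u m x - κ m * v m x) = κ ℓ * (v' x - v ℓ x) := by
      rw [Finset.sum_eq_single ℓ]
      · simp [hu, Function.update_self]; ring
      · intro m _ hm; simp [hu, Function.update_of_ne hm]
      · simp
    rw [Finset.sum_sub_distrib] at h
    linarith
  by_contra hcon
  push_neg at hcon
  have hva : v ℓ a = 0 := by
    rcases hv ℓ a with h | h
    · exact h
    · rcases hv ℓ b with h' | h' <;> rw [h, h'] at hcon <;> linarith
  have hvb : v ℓ b = 1 := by
    rcases hv ℓ b with h | h
    · rw [h, hva] at hcon; linarith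
    · exact h
  have h1 := (hf v).1 b
  have h2 := (hf u).1 a
  rw [← ha] at h1
  rw [← hb, key a, key b, hva, hvb] at h2
  rcases hv' a with ha0 | ha1 <;> rcases hv' b with hb0 | hb1
  · rw [ha0, hb0] at h2; nlinarith [hκ ℓ]
  · rw [ha0, hb1] at h2
    have heq : (∑ m, κ m * v m b) + γ b = (∑ m, κ m * v m a) + γ a := by nlinarith [hκ ℓ]
    have hab : a ≤ b := by rw [ha]; exact (hf v).2 b (by rw [← ha]; exact heq)
    have heq' : (∑ m, κ m * u m a) + γ a = (∑ m, κ m * u m b) + γ b := by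
      rw [key a, key b, hva, hvb, ha0, hb1]; linarith
    have hba : b ≤ a := by rw [hb]; exact (hf u).2 a (by rw [← hb]; exact heq')
    have hEq : a = b := le_antisymm hab hba
    rw [hEq, hvb] at hva
    norm_num at hva
  · rw [ha1, hb0] at h2; nlinarith [hκ ℓ]
  · rw [ha1, hb1] at h2; nlinarith [hκ ℓ]
end
end

section
/- For n ≥ 2 players with full valuation domains V_ℓ = ℝ₊^{|A|} and publicly known budgets, if at least one player has a finite budget, then no affine maximizer f(v) ∈ argmax_a ( Σ_ℓ κ_ℓ·v_ℓ(a) + γ_a ) (κ_ℓ > 0, γ_a ∈ ℝ, |A| ≥ 2) is implementable with budget-feasible, individually-rational, no-positive-transfer payments. -/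
noncomputable section

/-- For `n ≥ 2` players with full nonnegative valuation domains and
publicly known budgets, if at least one player has a finite budget and `|A| ≥ 2`, then
no affine maximizer is implementable with budget-feasible, individually-rational,
no-positive-transfer payments. -/
theorem stmt17 {n : ℕ} {A : Type*} [Fintype A]
    (hn : 2 ≤ n) (hA : 2 ≤ Fintype.card A)
    (κ : Fin n → ℝ) (hκ : ∀ ℓ, 0 < κ ℓ) (γ : A → ℝ)
    (Bud : Fin n → EReal) (hBud : ∀ ℓ, 0 ≤ Bud ℓ)
    (ℓ₀ : Fin n) (hfin : Bud ℓ₀ < ⊤)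
    (f : (Fin n → A → ℝ) → A)
    (hf : ∀ v : Fin n → A → ℝ, (∀ ℓ a, 0 ≤ v ℓ a) →
      ∀ a : A, (∑ ℓ, κ ℓ * v ℓ a) + γ a ≤ (∑ ℓ, κ ℓ * v ℓ (f v)) + γ (f v)) :
    ¬ ∃ p : Fin n → (Fin n → A → ℝ) → ℝ,
      (∀ (ℓ : Fin n) (v : Fin n → A → ℝ), (∀ m a, 0 ≤ v m a) →
        ∀ v' : A → ℝ, (∀ a, 0 ≤ v' a) →
          ((p ℓ (Function.update v ℓ v') : ℝ) : EReal) ≤ Bud ℓ →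
          v ℓ (f (Function.update v ℓ v')) - p ℓ (Function.update v ℓ v') ≤
            v ℓ (f v) - p ℓ v) ∧
      (∀ (ℓ : Fin n) (v : Fin n → A → ℝ), (∀ m a, 0 ≤ v m a) → p ℓ v ≤ v ℓ (f v)) ∧
      (∀ (ℓ : Fin n) (v : Fin n → A → ℝ), (∀ m a, 0 ≤ v m a) →
        ((p ℓ v : ℝ) : EReal) ≤ Bud ℓ) ∧
      (∀ (ℓ : Fin n) (v : Fin n → A → ℝ), (∀ m a, 0 ≤ v m a) → 0 ≤ p ℓ v) := by
  classical
  rintro ⟨p, hIC, hIR, hBF, hNPT⟩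
  obtain ⟨a, b, hab⟩ := Fintype.exists_pair_of_one_lt_card (by omega : 1 < Fintype.card A)
  have : Nontrivial (Fin n) := Fin.nontrivial_iff_two_le.mpr hn
  obtain ⟨ℓ₁, hℓ⟩ := exists_ne ℓ₀
  have hbot : Bud ℓ₀ ≠ ⊥ := ne_of_gt (lt_of_lt_of_le (by norm_num : (⊥:EReal) < 0) (hBud ℓ₀))
  set B : ℝ := (Bud ℓ₀).toReal with hBdef
  have hBeq : (B : EReal) = Bud ℓ₀ := EReal.coe_toReal (ne_of_lt hfin) hbot
  have hB0 : 0 ≤ B := by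
    have h := hBud ℓ₀; rw [← hBeq] at h; exact_mod_cast h
  obtain ⟨G, hG⟩ := Finset.exists_le (Finset.univ.image γ)
  have hG' : ∀ c, γ c ≤ G := fun c => hG _ (Finset.mem_image_of_mem γ (Finset.mem_univ c))
  set S : ℝ := max G (κ ℓ₀ * (B+1) + γ b) with hSdef
  set C : ℝ := max 0 ((S + 1 - γ a)/ κ ℓ₁) with hCdef
  have hC0 : 0 ≤ C := le_max_left _ _
  have hC1 : S + 1 ≤ κ ℓ₁ * C + γ a := by
    have h1 : (S + 1 - γ a)/ κ ℓ₁ ≤ C := le_max_right _ _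
    have h2 := (div_le_iff₀ (hκ ℓ₁)).mp h1
    nlinarith
  set S' : ℝ := max G (κ ℓ₁ * C + γ a) with hS'def
  set T : ℝ := max 0 ((S' + 1 - γ b)/ κ ℓ₀) with hTdef
  have hT0 : 0 ≤ T := le_max_left _ _
  have hT1 : S' + 1 ≤ κ ℓ₀ * T + γ b := by
    have h1 : (S' + 1 - γ b)/ κ ℓ₀ ≤ T := le_max_right _ _
    have h2 := (div_le_iff₀ (hκ ℓ₀)).mp h1
    nlinarith
  set v : Fin n → A → ℝ :=
    fun m c => if m = ℓ₀ then (if c = b then B+1 else 0)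
      else if m = ℓ₁ then (if c = a then C else 0) else 0 with hvdef
  set w' : A → ℝ := fun c => if c = b then T else 0 with hw'def
  set v' : Fin n → A → ℝ := Function.update v ℓ₀ w' with hv'def
  have hv0 : ∀ c, v ℓ₀ c = if c = b then B+1 else 0 := fun c => by simp [hvdef]
  have hv1 : ∀ c, v ℓ₁ c = if c = a then C else 0 := fun c => by simp [hvdef, hℓ]
  have hvz : ∀ m, m ≠ ℓ₀ → m ≠ ℓ₁ → ∀ c, v m c = 0 := by
    intro m h0 h1 c; simp [hvdef, h0, h1]
  have hv'0 : ∀ c, v' ℓ₀ c = if c = b then T else 0 := fun c => by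
    simp [hv'def, hw'def]
  have hv'1 : ∀ c, v' ℓ₁ c = if c = a then C else 0 := fun c => by
    rw [hv'def, Function.update_of_ne hℓ]; exact hv1 c
  have hv'z : ∀ m, m ≠ ℓ₀ → m ≠ ℓ₁ → ∀ c, v' m c = 0 := by
    intro m h0 h1 c; rw [hv'def, Function.update_of_ne h0]; exact hvz m h0 h1 c
  have hvnn : ∀ m c, 0 ≤ v m c := by
    intro m c; simp only [hvdef]; split_ifs <;> linarith
  have hw'nn : ∀ c, 0 ≤ w' c := by
    intro c; simp only [hw'def]; split_ifs <;> linarith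
  have hv'nn : ∀ m c, 0 ≤ v' m c := by
    intro m c
    rcases eq_or_ne m ℓ₀ with rfl | h
    · rw [hv'def, Function.update_self]; exact hw'nn c
    · rw [hv'def, Function.update_of_ne h]; exact hvnn m c
  have hsum : ∀ (u : Fin n → A → ℝ), (∀ m, m ≠ ℓ₀ → m ≠ ℓ₁ → ∀ c, u m c = 0) →
      ∀ c, (∑ m, κ m * u m c) = κ ℓ₀ * u ℓ₀ c + κ ℓ₁ * u ℓ₁ c := by
    intro u hu c
    rw [← Finset.sum_subset (Finset.subset_univ ({ℓ₀, ℓ₁} : Finset (Fin n)))]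
    · rw [Finset.sum_pair (Ne.symm hℓ)]
    · intro x _ hx
      simp only [Finset.mem_insert, Finset.mem_singleton, not_or] at hx
      rw [hu x hx.1 hx.2, mul_zero]
  -- the outcome at v is a
  have hfv : f v = a := by
    by_contra h
    have h1 := hf v hvnn a
    rw [hsum v hvz a, hsum v hvz (f v), hv0 a, hv0 (f v), hv1 a, hv1 (f v),
      if_neg hab, if_pos rfl] at h1
    rcases eq_or_ne (f v) b with hb | hb
    · rw [if_pos hb, if_neg (hb ▸ h)] at h1
      have h2 : κ ℓ₀ * (B+1) + γ b ≤ S := le_max_right _ _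
      have h4 : γ (f v) = γ b := by rw [hb]
      nlinarith
    · rw [if_neg hb, if_neg h] at h1
      have h2 : γ (f v) ≤ G := hG' _
      have h3 : G ≤ S := le_max_left _ _
      nlinarith
  -- the outcome at v' is b
  have hfv' : f v' = b := by
    by_contra h
    have h1 := hf v' hv'nn b
    rw [hsum v' hv'z b, hsum v' hv'z (f v'), hv'0 b, hv'0 (f v'), hv'1 b, hv'1 (f v'),
      if_pos rfl, if_neg (Ne.symm hab)] at h1
    rcases eq_or_ne (f v') a with ha | ha
    · rw [if_neg h, if_pos ha] at h1
      have h2 : κ ℓ₁ * C + γ a ≤ S' := le_max_right _ _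
      have h4 : γ (f v') = γ a := by rw [ha]
      nlinarith
    · rw [if_neg h, if_neg ha] at h1
      have h2 : γ (f v') ≤ G := hG' _
      have h3 : G ≤ S' := le_max_left _ _
      nlinarith
  have hpv : p ℓ₀ v = 0 := by
    have h1 := hIR ℓ₀ v hvnn
    rw [hfv, hv0 a, if_neg hab] at h1
    exact le_antisymm h1 (hNPT ℓ₀ v hvnn)
  have hBF' := hBF ℓ₀ v' hv'nn
  have hp' : p ℓ₀ v' ≤ B := by
    rw [← hBeq] at hBF'; exact_mod_cast hBF'
  have hIC' := hIC ℓ₀ v hvnn w' hw'nn (by rw [← hv'def]; exact hBF ℓ₀ v' hv'nn)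
  rw [← hv'def, hfv, hfv'] at hIC'
  rw [hv0 b, if_pos rfl, hv0 a, if_neg hab, hpv] at hIC'
  linarith
end
end
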